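/- Let μ = 2 and ν = 3 and let α, β, γ, δ be real parameters. Then every solution (x, y) of the (2,3)-asynchronous system satisfies, for all t ∈ 𝕋_6 = {0, 6, 12, ...}, the six-step recurrence (x(t+6), y(t+6))ᵀ = Ψ·(x(t), y(t))ᵀ, where Ψ is the matrix with rows ((2α+1)³ + 6βγ, (2α+1)(2(2α+1)β + 2β) + 2β(3δ+1)) and (3(2α+1)γ + 3(3δ+1)γ, (3δ+1)² + 6βγ). -/

import Mathlib

/-! When `μ` and `ν` are natural numbers the lags `⌊n μ / ν⌋` are plain natural divisions.
One period `6 = 3·2 = 2·3` consists of three steps of `x` and two of `y`, whose lags are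
`2m, 2m, 2m+1` and `3m, 3m+1`; substituting these five steps into each other gives `Ψ`. -/

/-- `(x, y)` is a solution of the `(μ,ν)`-asynchronous system, where `x n` stands for the
value at time `n·μ ∈ 𝕋_μ` and `y n` for the value at time `n·ν ∈ 𝕋_ν`. -/
def IsAsyncSol (μ ν α β γ δ : ℝ) (x y : ℕ → ℝ) : Prop :=
  (∀ n : ℕ, x (n + 1) = (1 + μ * α) * x n + μ * β * y ⌊(n : ℝ) * μ / ν⌋₊) ∧
  (∀ n : ℕ, y (n + 1) = ν * γ * x ⌊(n : ℝ) * ν / μ⌋₊ + (1 + ν * δ) * y n)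

lemma Nat.floor_natCast_mul_div_natCast {K : Type*} [Semifield K] [LinearOrder K]
    [IsStrictOrderedRing K] [FloorSemiring K] (n a b : ℕ) :
    ⌊(n : K) * a / b⌋₊ = n * a / b := by
  exact_mod_cast Nat.floor_div_eq_div (K := K) (n * a) b

namespace IsAsyncSol

variable {μ ν : ℕ} {α β γ δ : ℝ} {x y : ℕ → ℝ}

lemma x_succ (h : IsAsyncSol μ ν α β γ δ x y) (n : ℕ) :
    x (n + 1) = (1 + μ * α) * x n + μ * β * y (n * μ / ν) := by
  rw [h.1, Nat.floor_natCast_mul_div_natCast]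

lemma y_succ (h : IsAsyncSol μ ν α β γ δ x y) (n : ℕ) :
    y (n + 1) = ν * γ * x (n * ν / μ) + (1 + ν * δ) * y n := by
  rw [h.2, Nat.floor_natCast_mul_div_natCast]

end IsAsyncSol

/-- For `μ = 2`, `ν = 3`: at `t = 6m ∈ 𝕋_6`, `x` has index `3m` and `y` has index `2m`. -/
theorem stmt15 (α β γ δ : ℝ) (x y : ℕ → ℝ) (h : IsAsyncSol 2 3 α β γ δ x y) :
    ∀ m : ℕ,
      ![x (3 * (m + 1)), y (2 * (m + 1))] =
        (!![(2*α+1)^3 + 6*β*γ, (2*α+1) * (2*(2*α+1)*β + 2*β) + 2*β*(3*δ+1);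
            3*(2*α+1)*γ + 3*(3*δ+1)*γ, (3*δ+1)^2 + 6*β*γ]).mulVec
          ![x (3 * m), y (2 * m)] := by
  intro m
  replace h : IsAsyncSol (2 : ℕ) (3 : ℕ) α β γ δ x y := by exact_mod_cast h
  have hx₁ := h.x_succ (3 * m)
  have hx₂ := h.x_succ (3 * m + 1)
  have hx₃ := h.x_succ (3 * m + 2)
  have hy₁ := h.y_succ (2 * m)
  have hy₂ := h.y_succ (2 * m + 1)
  rw [show 3 * m * 2 / 3 = 2 * m by omega] at hx₁
  rw [show (3 * m + 1) * 2 / 3 = 2 * m by omega] at hx₂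
  rw [show (3 * m + 2) * 2 / 3 = 2 * m + 1 by omega] at hx₃
  rw [show 2 * m * 3 / 2 = 3 * m by omega] at hy₁
  rw [show (2 * m + 1) * 3 / 2 = 3 * m + 1 by omega] at hy₂
  rw [show 3 * (m + 1) = 3 * m + 2 + 1 by ring, show 2 * (m + 1) = 2 * m + 1 + 1 by ring,
    hx₃, hy₂, hx₂, hy₁, hx₁]
  ext i
  fin_cases i <;> simp [Matrix.mulVec, dotProduct, Fin.sum_univ_two] <;> ring
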